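/- Let g(x) = ax² + bx + c with a ≠ 0, and let x, y, z be pairwise distinct reals with g(x) = y, g(y) = z, g(z) = x. Set p = y − x and r = (z−y)/(y−x). Then p = −(r²+r+1)/(a·r·(r+1)), x = −b/(2a) + (r³+2r²+r+1)/(2a·r·(r+1)), and r is a root of P_δ(X) = X⁶ + 2X⁵ − (δ+3)X⁴ − 2(δ+3)X³ + (2−δ)X² + 4X + 1, where δ = b² − 4ac − 2b − 7. -/

import Mathlib

/-!
The substitution `u = a x + b / 2` conjugates `g` to `u ↦ u ^ 2 + κ` with `κ = a c + b / 2 - b ^ 2 / 4`,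
so that `δ = -4 κ - 7` and `r = u + v`. For a 3-cycle `u ↦ v ↦ w ↦ u` of this map the differences
satisfy `w - v = (u + v) (v - u)`, `u - w = (v + w) (w - v)`, `v - u = (w + u) (u - w)`. Adding them
gives `1 + s + s t = 0` and multiplying them gives `s t m = 1`, where `s, t, m` are the pairwise sums;
eliminating `t` and `m` expresses `u`, hence `v = s - u` and `κ = v - u ^ 2`, as rational functions of `s`.
-/

def Ppoly (α X : ℝ) : ℝ :=
  X ^ 6 + 2 * X ^ 5 - (α + 3) * X ^ 4 - 2 * (α + 3) * X ^ 3 + (2 - α) * X ^ 2 + 4 * X + 1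

section SqAddThreeCycle

variable {κ u v w : ℝ}

theorem one_add_add_mul_add_eq_zero_of_sq_add_cycle (huv : u ≠ v)
    (hv : u ^ 2 + κ = v) (hw : v ^ 2 + κ = w) (hu : w ^ 2 + κ = u) :
    1 + (u + v) + (u + v) * (v + w) = 0 := by
  have h : (v - u) * (1 + (u + v) + (u + v) * (v + w)) = 0 := by
    linear_combination (1 + v + w) * (hw - hv) + (hu - hw)
  exact (mul_eq_zero.mp h).resolve_left (sub_ne_zero.mpr huv.symm)

theorem add_mul_add_mul_add_eq_one_of_sq_add_cycle (huv : u ≠ v) (hvw : v ≠ w) (hwu : w ≠ u)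
    (hv : u ^ 2 + κ = v) (hw : v ^ 2 + κ = w) (hu : w ^ 2 + κ = u) :
    (u + v) * (v + w) * (w + u) = 1 := by
  have h : (v - u) * (w - v) * (u - w) * ((u + v) * (v + w) * (w + u) - 1) = 0 := by
    linear_combination (v + w) * (w - v) * (w + u) * (u - w) * (hw - hv)
      + (w - v) * (w + u) * (u - w) * (hu - hw) + (w - v) * (u - w) * (hv - hu)
  simpa [sub_eq_zero, huv.symm, hvw.symm, hwu.symm] using h

theorem add_ne_zero_of_sq_add_cycle (huv : u ≠ v)
    (hv : u ^ 2 + κ = v) (hw : v ^ 2 + κ = w) (hu : w ^ 2 + κ = u) :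
    u + v ≠ 0 := by
  intro hs
  have h := one_add_add_mul_add_eq_zero_of_sq_add_cycle huv hv hw hu
  rw [hs] at h
  norm_num at h

theorem add_add_one_ne_zero_of_sq_add_cycle (huv : u ≠ v) (hvw : v ≠ w) (hwu : w ≠ u)
    (hv : u ^ 2 + κ = v) (hw : v ^ 2 + κ = w) (hu : w ^ 2 + κ = u) :
    u + v + 1 ≠ 0 := by
  intro hs
  have h := add_mul_add_mul_add_eq_one_of_sq_add_cycle huv hvw hwu hv hw hu
  have : (u + v) * (v + w) = 0 := by
    linear_combination one_add_add_mul_add_eq_zero_of_sq_add_cycle huv hv hw hu - hs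
  rw [this, zero_mul] at h
  norm_num at h

theorem two_mul_mul_eq_of_sq_add_cycle (huv : u ≠ v) (hvw : v ≠ w) (hwu : w ≠ u)
    (hv : u ^ 2 + κ = v) (hw : v ^ 2 + κ = w) (hu : w ^ 2 + κ = u) :
    2 * u * ((u + v) * (u + v + 1)) = (u + v) ^ 3 + 2 * (u + v) ^ 2 + (u + v) + 1 := by
  linear_combination (-(u + v + 1) + (w + u) * (u + v))
      * one_add_add_mul_add_eq_zero_of_sq_add_cycle huv hv hw hu
    - (u + v) * add_mul_add_mul_add_eq_one_of_sq_add_cycle huv hvw hwu hv hw hu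

theorem Ppoly_neg_four_mul_sub_seven_add_eq_zero_of_sq_add_cycle
    (huv : u ≠ v) (hvw : v ≠ w) (hwu : w ≠ u)
    (hv : u ^ 2 + κ = v) (hw : v ^ 2 + κ = w) (hu : w ^ 2 + κ = u) :
    Ppoly (-4 * κ - 7) (u + v) = 0 := by
  have h := two_mul_mul_eq_of_sq_add_cycle huv hvw hwu hv hw hu
  unfold Ppoly
  -- `Ppoly α s` is affine in `α` with slope `-(s (s + 1)) ^ 2`, and `κ = v - u ^ 2` with `v = s - u`.
  linear_combination 4 * ((u + v) * (u + v + 1)) ^ 2 * hv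
    - (2 * u * ((u + v) * (u + v + 1)) + ((u + v) ^ 3 + 2 * (u + v) ^ 2 + (u + v) + 1)
      + 2 * ((u + v) * (u + v + 1))) * h

end SqAddThreeCycle

theorem sq_add_eq_of_quadratic_eq {a b c x y : ℝ} (h : a * x ^ 2 + b * x + c = y) :
    (a * x + b / 2) ^ 2 + (a * c + b / 2 - b ^ 2 / 4) = a * y + b / 2 := by
  linear_combination a * h

theorem stmt8 (a b c x y z : ℝ) (ha : a ≠ 0)
    (hxy : x ≠ y) (hyz : y ≠ z) (hxz : x ≠ z)
    (h1 : a * x ^ 2 + b * x + c = y)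
    (h2 : a * y ^ 2 + b * y + c = z)
    (h3 : a * z ^ 2 + b * z + c = x) :
    let p := y - x
    let r := (z - y) / (y - x)
    let δ := b ^ 2 - 4 * a * c - 2 * b - 7
    p = -(r ^ 2 + r + 1) / (a * r * (r + 1)) ∧
    x = -b / (2 * a) + (r ^ 3 + 2 * r ^ 2 + r + 1) / (2 * a * r * (r + 1)) ∧
    Ppoly δ r = 0 := by
  intro p r δ
  have hv := sq_add_eq_of_quadratic_eq h1
  have hw := sq_add_eq_of_quadratic_eq h2
  have hu := sq_add_eq_of_quadratic_eq h3
  have hne {s t : ℝ} (hst : s ≠ t) : a * s + b / 2 ≠ a * t + b / 2 := by simpa [ha] using hst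
  have huv := hne hxy
  have hvw := hne hyz
  have hwu := hne hxz.symm
  have hr : r = a * x + b / 2 + (a * y + b / 2) := by
    rw [div_eq_iff (sub_ne_zero.mpr hxy.symm)]
    linear_combination h1 - h2
  have hs := add_ne_zero_of_sq_add_cycle huv hv hw hu
  have hs1 := add_add_one_ne_zero_of_sq_add_cycle huv hvw hwu hv hw hu
  have h2u := two_mul_mul_eq_of_sq_add_cycle huv hvw hwu hv hw hu
  rw [← hr] at hs hs1 h2u
  clear_value r
  refine ⟨?_, ?_, ?_⟩
  · rw [eq_div_iff (by positivity)]
    linear_combination -h2u - r * (r + 1) * hr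
  · field_simp
    linear_combination h2u
  · rw [hr, show δ = -4 * (a * c + b / 2 - b ^ 2 / 4) - 7 by ring]
    exact Ppoly_neg_four_mul_sub_seven_add_eq_zero_of_sq_add_cycle huv hvw hwu hv hw hu
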